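/- arXiv:math/0107033 — 2 statements merged into one kernel-verified Lean document; each statement's English description precedes it below -/
import Mathlib

section
/- Let F be a finite field, b ≥ 1, and x₁,…,x_{b+1} distinct nonzero elements of F. For f of degree ≤ b and a permutation π ∈ S_{b+1}, define f_π to be the unique polynomial of degree ≤ b with f_π(x_{π(k)}) = f(x_k) for all k. For a, c ∈ F define n_{a,c} = #{(f,π) : deg f ≤ b, f(0) = a, f_π(0) = c}. Then n_{a,c} = n_{a',c'} whenever a ≠ c and a' ≠ c', and n_{a,a} = n_{a',a'} for all a, a'. -/
/-- `n_{a,c}`: the number of pairs `(f, π)` with `f` a polynomial of degree ≤ b,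
`f(0) = a`, and `f_π(0) = c`, where `f_π` is the unique polynomial of degree ≤ b
with `f_π(x_{π k}) = f(x_k)` for all `k`. -/
noncomputable def pairCount {F : Type*} [Field F] (b : ℕ) (x : Fin (b + 1) → F) (a c : F) : ℕ :=
  Nat.card {p : Polynomial F × Equiv.Perm (Fin (b + 1)) //
    p.1.degree ≤ (b : ℕ) ∧ p.1.eval 0 = a ∧
    ∃ g : Polynomial F, g.degree ≤ (b : ℕ) ∧
      (∀ k, g.eval (x (p.2 k)) = p.1.eval (x k)) ∧ g.eval 0 = c}

open Polynomial in
private lemma aff_deg {F : Type*} [Field F] {b : ℕ} (d e : F) {f : F[X]}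
    (hf : f.degree ≤ (b : ℕ)) : (d • f + C e).degree ≤ (b : ℕ) :=
  (degree_add_le _ _).trans (max_le ((degree_smul_le _ _).trans hf)
    (degree_C_le.trans (by exact_mod_cast Nat.zero_le b)))

open Polynomial in
private lemma pairCount_affine {F : Type*} [Field F] (b : ℕ) (x : Fin (b + 1) → F)
    (a c d e : F) (hd : d ≠ 0) :
    pairCount b x a c = pairCount b x (d * a + e) (d * c + e) := by
  apply Nat.card_congr
  refine ⟨fun p => ⟨(d • p.1.1 + C e, p.1.2), ?_⟩,
          fun p => ⟨(d⁻¹ • (p.1.1 - C e), p.1.2), ?_⟩, ?_, ?_⟩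
  · obtain ⟨h1, h2, g, hg1, hg2, hg3⟩ := p.2
    refine ⟨aff_deg d e h1, by simp [h2], d • g + C e, aff_deg d e hg1,
      fun k => by simp [hg2 k], by simp [hg3]⟩
  · obtain ⟨h1, h2, g, hg1, hg2, hg3⟩ := p.2
    have hdeg : ∀ {f : F[X]}, f.degree ≤ (b : ℕ) →
        (d⁻¹ • (f - C e)).degree ≤ (b : ℕ) := fun hf =>
      (degree_smul_le _ _).trans ((degree_sub_le _ _).trans
        (max_le hf (degree_C_le.trans (by exact_mod_cast Nat.zero_le b))))
    refine ⟨hdeg h1, ?_, d⁻¹ • (g - C e), hdeg hg1,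
      fun k => by simp [hg2 k], ?_⟩
    · simp [h2]; field_simp
    · simp [hg3]; field_simp
  · rintro ⟨⟨f, π⟩, h⟩
    apply Subtype.ext
    simp [smul_smul, inv_mul_cancel₀ hd]
  · rintro ⟨⟨f, π⟩, h⟩
    apply Subtype.ext
    have : d • (d⁻¹ • (f - C e)) + C e = f := by
      rw [smul_smul, mul_inv_cancel₀ hd, one_smul]; ring
    simpa using this

/-- `n_{a,c} = n_{a',c'}` whenever `a ≠ c` and `a' ≠ c'`, and `n_{a,a} = n_{a',a'}`. -/
theorem pairCount_invariance {F : Type*} [Field F]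
    (b : ℕ) (hb : 1 ≤ b) (x : Fin (b + 1) → F)
    (hx : Function.Injective x) (hx0 : ∀ k, x k ≠ 0) :
    (∀ a c a' c' : F, a ≠ c → a' ≠ c' →
        pairCount b x a c = pairCount b x a' c') ∧
    (∀ a a' : F, pairCount b x a a = pairCount b x a' a') := by
  constructor
  · intro a c a' c' hac ha'c'
    set d : F := (a' - c') / (a - c) with hdef
    have hd : d ≠ 0 := div_ne_zero (sub_ne_zero.mpr ha'c') (sub_ne_zero.mpr hac)
    have key := pairCount_affine b x a c d (a' - d * a) hd
    have hmul : d * (a - c) = a' - c' :=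
      div_mul_cancel₀ _ (sub_ne_zero.mpr hac)
    have e1 : d * a + (a' - d * a) = a' := by ring
    have e2 : d * c + (a' - d * a) = c' := by linear_combination -hmul
    rw [e1, e2] at key
    exact key
  · intro a a'
    have key := pairCount_affine b x a a 1 (a' - a) one_ne_zero
    have e1 : (1 : F) * a + (a' - a) = a' := by ring
    rw [e1] at key
    exact key
end

section
/- With the notation of the previous statement, for all a ≠ c in F one has n_{a,a} > n_{a,c}. In particular, counting pairs (f,π) with f(0)=a weighted by the value f_π(0), the diagonal count strictly exceeds every off-diagonal count. -/
/-! Record a polynomial `f` of degree `≤ b` by its values `v = f ∘ x` at the nodes; then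
`f(0) = ℓ v` for the Lagrange functional `ℓ`, and `f_π(0) = ℓ_π v`, where `ℓ_π` is the Lagrange
functional of the permuted nodes `x ∘ π`. So `n_{a,c} = ∑_π #{v | ℓ v = a ∧ ℓ_π v = c}`.
If `ℓ_π = ℓ` the summand vanishes for `a ≠ c`. Otherwise, as both functionals send the constant
vector `1` to `1`, they are not proportional, so translating by a vector of `ker ℓ` on which
`ℓ_π` takes any prescribed value shows the summand is independent of `c`. The identity
permutation then makes `n_{a,a}` strictly larger. -/

open Polynomial Finset

namespace LinearMap

variable {K V : Type*} [Field K] [AddCommGroup V] [Module K V]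

def jointLevelSet (ℓ ℓ' : V →ₗ[K] K) (a c : K) : Set V := {v | ℓ v = a ∧ ℓ' v = c}

variable {ℓ ℓ' : V →ₗ[K] K} {u : V}

theorem jointLevelSet_self_of_ne {a c : K} (hac : a ≠ c) : jointLevelSet ℓ ℓ a c = ∅ :=
  Set.eq_empty_of_forall_notMem fun _ hv => hac (hv.1.symm.trans hv.2)

theorem jointLevelSet_self_nonempty (hu : ℓ u = 1) (a : K) : (jointLevelSet ℓ ℓ a a).Nonempty :=
  ⟨a • u, by simp [jointLevelSet, hu]⟩

theorem exists_eq_zero_and_eq (hu : ℓ u = 1) (hu' : ℓ' u = 1) (hne : ℓ' ≠ ℓ) (d : K) :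
    ∃ v₀, ℓ v₀ = 0 ∧ ℓ' v₀ = d := by
  obtain ⟨v, hv⟩ : ∃ v, ℓ' v ≠ ℓ v := by
    by_contra! h
    exact hne (LinearMap.ext h)
  refine ⟨(d / (ℓ' v - ℓ v)) • (v - ℓ v • u), by simp [hu], ?_⟩
  simp only [map_smul, map_sub, hu', smul_eq_mul, mul_one]
  exact div_mul_cancel₀ d (sub_ne_zero.mpr hv)

theorem card_jointLevelSet_add (hu : ℓ u = 1) (hu' : ℓ' u = 1) (hne : ℓ' ≠ ℓ) (a c d : K) :
    Nat.card (jointLevelSet ℓ ℓ' a (c + d)) = Nat.card (jointLevelSet ℓ ℓ' a c) := by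
  obtain ⟨v₀, h₀, hd⟩ := exists_eq_zero_and_eq hu hu' hne d
  refine Nat.card_congr ((Equiv.addRight v₀).subtypeEquiv fun v => ?_).symm
  simp [jointLevelSet, h₀, hd]

theorem sum_card_jointLevelSet_lt [Finite V] {ι : Type*} [Fintype ι] (L : ι → V →ₗ[K] K)
    (i₀ : ι) (hi₀ : L i₀ = ℓ) (hu : ℓ u = 1) (hLu : ∀ i, L i u = 1) {a c : K} (hac : a ≠ c) :
    ∑ i, Nat.card (jointLevelSet ℓ (L i) a c) < ∑ i, Nat.card (jointLevelSet ℓ (L i) a a) := by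
  refine sum_lt_sum (fun i _ => ?_) ⟨i₀, mem_univ _, ?_⟩
  · by_cases hi : L i = ℓ
    · simp [hi, jointLevelSet_self_of_ne hac]
    · rw [← card_jointLevelSet_add hu (hLu i) hi a a (c - a), add_sub_cancel]
  · have := (jointLevelSet_self_nonempty hu a).to_subtype
    rw [hi₀, jointLevelSet_self_of_ne hac, Nat.card_of_isEmpty]
    exact Nat.card_pos

end LinearMap

namespace Lagrange

variable {F : Type*} [Field F] {b : ℕ} {x : Fin (b + 1) → F}

theorem degree_le_iff_lt_card {f : F[X]} :
    f.degree ≤ b ↔ f.degree < #(univ : Finset (Fin (b + 1))) := by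
  rw [card_univ, Fintype.card_fin, ← mem_degreeLE, ← degreeLT_succ_eq_degreeLE, mem_degreeLT]

noncomputable def evalNodesEquiv (hx : Function.Injective x) :
    {f : F[X] // f.degree ≤ b} ≃ (Fin (b + 1) → F) where
  toFun f i := f.1.eval (x i)
  invFun v := ⟨interpolate univ x v, degree_le_iff_lt_card.mpr (degree_interpolate_lt _ hx.injOn)⟩
  left_inv f := Subtype.ext (eq_interpolate hx.injOn (degree_le_iff_lt_card.mp f.2)).symm
  right_inv _ := funext fun i => eval_interpolate_at_node _ hx.injOn (mem_univ i)

noncomputable def interpolateEval (x : Fin (b + 1) → F) (z : F) : (Fin (b + 1) → F) →ₗ[F] F :=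
  (leval z).comp (interpolate univ x)

variable (hx : Function.Injective x)
include hx

theorem interpolateEval_evalNodesEquiv (z : F) (f : {f : F[X] // f.degree ≤ b}) :
    interpolateEval x z (evalNodesEquiv hx f) = f.1.eval z :=
  congrArg (fun g : {f : F[X] // f.degree ≤ b} => g.1.eval z)
    ((evalNodesEquiv hx).symm_apply_apply f)

theorem interpolateEval_one (z : F) : interpolateEval x z 1 = 1 := by
  simp [interpolateEval, interpolate_one hx.injOn univ_nonempty]

theorem exists_degree_le_eval_eq_iff (z : F) (v : Fin (b + 1) → F) (c : F) :
    (∃ g : F[X], g.degree ≤ b ∧ (∀ k, g.eval (x k) = v k) ∧ g.eval z = c) ↔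
      interpolateEval x z v = c := by
  constructor
  · rintro ⟨g, hg, hgv, rfl⟩
    rw [← interpolateEval_evalNodesEquiv hx z ⟨g, hg⟩]
    exact congrArg _ (funext hgv).symm
  · intro h
    exact ⟨_, ((evalNodesEquiv hx).symm v).2, congrFun ((evalNodesEquiv hx).apply_symm_apply v), h⟩

end Lagrange

open Lagrange LinearMap

theorem pairCount_eq_sum_card_jointLevelSet {F : Type*} [Field F] [Finite F] {b : ℕ}
    {x : Fin (b + 1) → F} (hx : Function.Injective x) (a c : F) :
    pairCount b x a c = ∑ π : Equiv.Perm (Fin (b + 1)), Nat.card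
      (jointLevelSet (interpolateEval x 0) (interpolateEval (x ∘ π) 0) a c) := by
  rw [pairCount, ← Nat.card_sigma]
  refine Nat.card_congr (((Equiv.prodComm _ _).subtypeEquiv fun _ => Iff.rfl).trans
    ((Equiv.subtypeProdEquivSigmaSubtype fun (π : Equiv.Perm (Fin (b + 1))) (f : F[X]) =>
      f.degree ≤ b ∧ f.eval 0 = a ∧
        ∃ g : F[X], g.degree ≤ b ∧ (∀ k, g.eval (x (π k)) = f.eval (x k)) ∧ g.eval 0 = c).trans
      (Equiv.sigmaCongrRight fun π => ?_)))
  refine (Equiv.subtypeSubtypeEquivSubtypeInter (fun f : F[X] => f.degree ≤ b) _).symm.trans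
    ((evalNodesEquiv hx).subtypeEquiv fun f => ?_)
  rw [← interpolateEval_evalNodesEquiv hx 0 f]
  exact and_congr_right' (exists_degree_le_eval_eq_iff (hx.comp π.injective) 0 _ c)

theorem pairCount_diag_gt_offdiag_general {F : Type*} [Field F] [Fintype F]
    (b : ℕ) (x : Fin (b + 1) → F) (hx : Function.Injective x) :
    ∀ a c : F, a ≠ c → pairCount b x a c < pairCount b x a a := by
  intro a c hac
  rw [pairCount_eq_sum_card_jointLevelSet hx, pairCount_eq_sum_card_jointLevelSet hx]
  exact sum_card_jointLevelSet_lt _ (1 : Equiv.Perm (Fin (b + 1))) rfl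
    (interpolateEval_one hx 0) (fun π => interpolateEval_one (hx.comp π.injective) 0) hac

/-- The diagonal count strictly exceeds every off-diagonal count:
`n_{a,a} > n_{a,c}` for `a ≠ c`. -/
theorem pairCount_diag_gt_offdiag {F : Type*} [Field F] [Fintype F]
    (b : ℕ) (hb : 1 ≤ b) (hq : b + 2 < Fintype.card F)
    (x : Fin (b + 1) → F) (hx : Function.Injective x) (hx0 : ∀ k, x k ≠ 0) :
    ∀ a c : F, a ≠ c → pairCount b x a c < pairCount b x a a :=
  pairCount_diag_gt_offdiag_general b x hx
end
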